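/- arXiv:2201.03077 — 2 statements merged into one kernel-verified Lean document; each statement's English description precedes it below -/
import Mathlib

section
/- Writing V in 2×2 block form conformal with the partition X = [X₁ X₂] (so the upper-left block has size P₁×P₁), the upper-left block of V equals (X₁ᵀ Φ̃⁻¹ X₁)⁻¹, where Φ̃ = Φ + X₂ Σ X₂ᵀ. -/
open Matrix

/-
With `A = X₁ᵀΦ⁻¹X₁`, `B = X₁ᵀΦ⁻¹X₂` and `D = X₂ᵀΦ⁻¹X₂ + Σ⁻¹`, the matrix inverted in `V` is the
block matrix `[A B; Bᵀ D]`, whose upper-left inverse block is the inverse of the Schur complement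
`A - B D⁻¹ Bᵀ`. By the Woodbury identity, `(Φ + X₂ΣX₂ᵀ)⁻¹ = Φ⁻¹ - Φ⁻¹X₂ D⁻¹ X₂ᵀΦ⁻¹`, and sandwiching
this between `X₁ᵀ` and `X₁` gives exactly that Schur complement.
-/

namespace Matrix

theorem transpose_fromCols_mul_mul_fromCols {l m n α : Type*} [Fintype l] [Semiring α]
    (X₁ : Matrix l m α) (X₂ : Matrix l n α) (M : Matrix l l α) :
    (fromCols X₁ X₂)ᵀ * M * fromCols X₁ X₂ =
      fromBlocks (X₁ᵀ * M * X₁) (X₁ᵀ * M * X₂) (X₂ᵀ * M * X₁) (X₂ᵀ * M * X₂) := by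
  rw [transpose_fromCols, fromRows_mul, fromRows_mul_fromCols]

variable {l m n α : Type*} [Fintype l] [Fintype m] [Fintype n]
  [DecidableEq l] [DecidableEq m] [DecidableEq n] [CommRing α]

/-- With `⁻¹` the nonsingular inverse this needs no invertibility of the Schur complement:
when it is singular, so is the block matrix (`det = det D * det (A - B D⁻¹ C)`) and both sides
are `0`. -/
theorem toBlocks₁₁_inv_fromBlocks_of_isUnit₂₂ (A : Matrix m m α) (B : Matrix m n α)
    (C : Matrix n m α) {D : Matrix n n α} (hD : IsUnit D) :
    (fromBlocks A B C D)⁻¹.toBlocks₁₁ = (A - B * D⁻¹ * C)⁻¹ := by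
  obtain ⟨_⟩ := hD.nonempty_invertible
  rw [← invOf_eq_nonsing_inv D]
  by_cases hSchur : IsUnit (A - B * ⅟D * C)
  · obtain ⟨_⟩ := hSchur.nonempty_invertible
    let := fromBlocks₂₂Invertible A B C D
    rw [← invOf_eq_nonsing_inv, invOf_fromBlocks₂₂_eq, toBlocks_fromBlocks₁₁,
      invOf_eq_nonsing_inv]
  · have hM : ¬IsUnit (fromBlocks A B C D) := isUnit_fromBlocks_iff_of_invertible₂₂.not.mpr hSchur
    rw [isUnit_iff_isUnit_det] at hSchur hM
    rw [nonsing_inv_apply_not_isUnit _ hM, nonsing_inv_apply_not_isUnit _ hSchur]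
    rfl

theorem toBlocks₁₁_inv_gram_add_fromBlocks_zero_inv (X₁ : Matrix l m α) (X₂ : Matrix l n α)
    {Φ : Matrix l l α} {S : Matrix n n α} (hΦ : IsUnit Φ) (hS : IsUnit S)
    (hD : IsUnit (X₂ᵀ * Φ⁻¹ * X₂ + S⁻¹)) :
    ((fromCols X₁ X₂)ᵀ * Φ⁻¹ * fromCols X₁ X₂ + fromBlocks 0 0 0 S⁻¹)⁻¹.toBlocks₁₁ =
      (X₁ᵀ * (Φ + X₂ * S * X₂ᵀ)⁻¹ * X₁)⁻¹ := by
  have woodbury : (Φ + X₂ * S * X₂ᵀ)⁻¹ =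
      Φ⁻¹ - Φ⁻¹ * X₂ * (X₂ᵀ * Φ⁻¹ * X₂ + S⁻¹)⁻¹ * X₂ᵀ * Φ⁻¹ := by
    rw [add_comm (X₂ᵀ * _ * _)] at hD ⊢
    exact add_mul_mul_inv_eq_sub Φ X₂ S X₂ᵀ hΦ hS hD
  rw [transpose_fromCols_mul_mul_fromCols, fromBlocks_add, add_zero, add_zero, add_zero,
    toBlocks₁₁_inv_fromBlocks_of_isUnit₂₂ _ _ _ hD, woodbury]
  simp only [Matrix.mul_sub, Matrix.sub_mul, Matrix.mul_assoc]

end Matrix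

theorem stmt_5_general (N P₁ P₂ : ℕ)
    (X₁ : Matrix (Fin N) (Fin P₁) ℝ) (X₂ : Matrix (Fin N) (Fin P₂) ℝ)
    (d : Fin N → ℝ) (hd : ∀ i, 0 < d i)
    (S : Matrix (Fin P₂) (Fin P₂) ℝ) (hS : S.PosDef) :
    let Φ : Matrix (Fin N) (Fin N) ℝ := Matrix.diagonal d
    let X : Matrix (Fin N) (Fin P₁ ⊕ Fin P₂) ℝ := Matrix.fromCols X₁ X₂
    let V : Matrix (Fin P₁ ⊕ Fin P₂) (Fin P₁ ⊕ Fin P₂) ℝ :=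
      (Xᵀ * Φ⁻¹ * X + Matrix.fromBlocks 0 0 0 S⁻¹)⁻¹
    let Φt : Matrix (Fin N) (Fin N) ℝ := Φ + X₂ * S * X₂ᵀ
    V.toBlocks₁₁ = (X₁ᵀ * Φt⁻¹ * X₁)⁻¹ := by
  intro Φ X V Φt
  have hΦ : Φ.PosDef := posDef_diagonal_iff.mpr hd
  have hD : (X₂ᵀ * Φ⁻¹ * X₂ + S⁻¹).PosDef := by
    refine PosDef.posSemidef_add ?_ hS.inv
    simpa only [conjTranspose_eq_transpose_of_trivial] using
      hΦ.inv.posSemidef.conjTranspose_mul_mul_same X₂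
  exact toBlocks₁₁_inv_gram_add_fromBlocks_zero_inv X₁ X₂ hΦ.isUnit hS.isUnit hD.isUnit

/-- Writing `V` in 2×2 block form conformal with `X = [X₁ X₂]`, the upper-left
`P₁×P₁` block of `V` equals `(X₁ᵀ Φ̃⁻¹ X₁)⁻¹` where `Φ̃ = Φ + X₂ Σ X₂ᵀ`. -/
theorem stmt_5 (N P₁ P₂ : ℕ) (hN : 0 < N) (hP₁ : 0 < P₁) (hP₂ : 0 < P₂)
    (X₁ : Matrix (Fin N) (Fin P₁) ℝ) (X₂ : Matrix (Fin N) (Fin P₂) ℝ)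
    (hX₁ : LinearIndependent ℝ X₁ᵀ)
    (d : Fin N → ℝ) (hd : ∀ i, 0 < d i)
    (S : Matrix (Fin P₂) (Fin P₂) ℝ) (hS : S.PosDef) :
    let Φ : Matrix (Fin N) (Fin N) ℝ := Matrix.diagonal d
    let X : Matrix (Fin N) (Fin P₁ ⊕ Fin P₂) ℝ := Matrix.fromCols X₁ X₂
    let V : Matrix (Fin P₁ ⊕ Fin P₂) (Fin P₁ ⊕ Fin P₂) ℝ :=
      (Xᵀ * Φ⁻¹ * X + Matrix.fromBlocks 0 0 0 S⁻¹)⁻¹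
    let Φt : Matrix (Fin N) (Fin N) ℝ := Φ + X₂ * S * X₂ᵀ
    V.toBlocks₁₁ = (X₁ᵀ * Φt⁻¹ * X₁)⁻¹ :=
  stmt_5_general N P₁ P₂ X₁ X₂ d hd S hS
end

section
/- Let B ⊂ {1,…,N} be a set of n_j ≥ 1 indices whose rows of X are all equal to a common vector xⱼᵀ and whose diagonal entries of Φ all equal a common φⱼ². Let X₋, Φ₋, Y₋ denote X, Φ, Y with the rows (and corresponding diagonal entries) in B deleted, and assume X₋'s first P₁ columns (the retained rows of X₁) have linearly independent columns so that V₋ = (X₋ᵀ Φ₋⁻¹ X₋ + blockDiag(0_{P₁×P₁}, Σ⁻¹))⁻¹ exists and is positive definite. Set β̂ = V Xᵀ Φ⁻¹ Y, β̂₋ = V₋ X₋ᵀ Φ₋⁻¹ Y₋, Ŷⱼ = xⱼᵀ β̂, and let Ȳⱼ be the mean of the entries of Y with indices in B. Then (n_j/φⱼ²) xⱼᵀ V xⱼ < 1 and β̂₋ = β̂ + (n_j/φⱼ²) · (Ŷⱼ − Ȳⱼ)/(1 − (n_j/φⱼ²) xⱼᵀ V xⱼ) · V xⱼ. -/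
/-!
Write `A = V⁻¹` and `A₋ = V₋⁻¹`. Since the deleted rows all equal `xⱼᵀ` with weight `1/φⱼ²`,
`A = A₋ + c xⱼ xⱼᵀ` and `XᵀΦ⁻¹Y = X₋ᵀΦ₋⁻¹Y₋ + c Ȳⱼ xⱼ` with `c = nⱼ/φⱼ²`. Evaluating the quadratic
form of `A₋ > 0` at `u = V xⱼ` gives `0 < t (1 - c t)` for `t = xⱼᵀ V xⱼ ≥ 0`, hence `c t < 1`;
the formula for `β̂₋ = A₋⁻¹ (XᵀΦ⁻¹Y - c Ȳⱼ xⱼ)` is then the Sherman–Morrison update.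
-/

open Matrix

theorem Finset.sum_add_sum_subtype_notMem {ι M : Type*} [Fintype ι] [DecidableEq ι]
    [AddCommMonoid M] (s : Finset ι) (f : ι → M) :
    ∑ i ∈ s, f i + ∑ i : {i // i ∉ s}, f i = ∑ i, f i := by
  rw [← s.sum_add_sum_compl f, Finset.sum_subtype sᶜ (fun _ => Finset.mem_compl) f]

namespace Matrix

variable {ι n : Type*} [Fintype ι]

section CommRing

variable {R : Type*} [CommRing R]

lemma add_smul_vecMulVec_mulVec [Fintype n] (M : Matrix n n R) (c : R) (x w : n → R) :
    (M + c • vecMulVec x x) *ᵥ w = M *ᵥ w + (c * (x ⬝ᵥ w)) • x := by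
  rw [add_mulVec, smul_mulVec, vecMulVec_mulVec, op_smul_eq_smul, smul_smul]

lemma transpose_mul_diagonal_mul_self_eq_sum [DecidableEq ι] (X : Matrix ι n R) (w : ι → R) :
    Xᵀ * diagonal w * X = ∑ i, w i • vecMulVec (X i) (X i) := by
  ext k l
  rw [mul_apply]
  simp only [mul_diagonal, transpose_apply, Matrix.sum_apply, smul_apply, vecMulVec_apply,
    smul_eq_mul]
  exact Finset.sum_congr rfl fun i _ => by ring

lemma transpose_mul_diagonal_mulVec_eq_sum [DecidableEq ι] (X : Matrix ι n R) (w y : ι → R) :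
    (Xᵀ * diagonal w) *ᵥ y = ∑ i, (w i * y i) • X i := by
  ext k
  simp only [mul_diagonal, mulVec, dotProduct, transpose_apply, Finset.sum_apply,
    Pi.smul_apply, smul_eq_mul]
  exact Finset.sum_congr rfl fun i _ => by ring

lemma transpose_mul_diagonal_mul_self_eq_submatrix_add [DecidableEq ι] (X : Matrix ι n R)
    (w : ι → R) {B : Finset ι} {x : n → R} {a : R} (hX : ∀ i ∈ B, X i = x)
    (hw : ∀ i ∈ B, w i = a) :
    Xᵀ * diagonal w * X =
      (X.submatrix (↑) id : Matrix {i // i ∉ B} n R)ᵀ * diagonal (fun i : {i // i ∉ B} => w i) *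
          (X.submatrix (↑) id : Matrix {i // i ∉ B} n R) + (B.card * a) • vecMulVec x x := by
  have hsum_B : ∑ i ∈ B, w i • vecMulVec (X i) (X i) = (B.card * a) • vecMulVec x x := by
    rw [Finset.sum_congr rfl fun i hi => by rw [hX i hi, hw i hi], Finset.sum_const,
      ← Nat.cast_smul_eq_nsmul R, smul_smul]
  rw [transpose_mul_diagonal_mul_self_eq_sum (X.submatrix _ id),
    transpose_mul_diagonal_mul_self_eq_sum,
    ← Finset.sum_add_sum_subtype_notMem B, hsum_B, add_comm]
  rfl

lemma transpose_mul_diagonal_mulVec_eq_submatrix_add [DecidableEq ι] (X : Matrix ι n R)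
    (w y : ι → R) {B : Finset ι} {x : n → R} {a : R} (hX : ∀ i ∈ B, X i = x)
    (hw : ∀ i ∈ B, w i = a) :
    (Xᵀ * diagonal w) *ᵥ y =
      ((X.submatrix (↑) id : Matrix {i // i ∉ B} n R)ᵀ * diagonal (fun i : {i // i ∉ B} => w i)) *ᵥ
          (fun i => y i) + (a * ∑ i ∈ B, y i) • x := by
  have hsum_B : ∑ i ∈ B, (w i * y i) • X i = (a * ∑ i ∈ B, y i) • x := by
    rw [Finset.sum_congr rfl fun i hi => by rw [hX i hi, hw i hi], ← Finset.sum_smul,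
      Finset.mul_sum]
  rw [transpose_mul_diagonal_mulVec_eq_sum (X.submatrix _ id),
    transpose_mul_diagonal_mulVec_eq_sum,
    ← Finset.sum_add_sum_subtype_notMem B, hsum_B, add_comm]
  rfl

end CommRing

lemma inv_diagonal_of_ne_zero {K : Type*} [Field K] [DecidableEq ι] {v : ι → K}
    (hv : ∀ i, v i ≠ 0) : (diagonal v)⁻¹ = diagonal v⁻¹ :=
  inv_eq_right_inv <| by
    rw [diagonal_mul_diagonal, ← diagonal_one]
    exact congrArg diagonal (funext fun i => mul_inv_cancel₀ (hv i))

variable [Fintype n]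

theorem PosDef.add_smul_vecMulVec_self {M : Matrix n n ℝ} (hM : M.PosDef) {c : ℝ} (hc : 0 ≤ c)
    (x : n → ℝ) : (M + c • vecMulVec x x).PosDef :=
  hM.add_posSemidef <| by simpa using (posSemidef_vecMulVec_self_star x).smul hc

variable [DecidableEq n]

theorem inv_add_smul_vecMulVec_mulVec {K : Type*} [Field K] {M : Matrix n n K} {c : K}
    {x : n → K} (hM : IsUnit M.det) (hA : IsUnit (M + c • vecMulVec x x).det)
    (hct : 1 - c * (x ⬝ᵥ (M + c • vecMulVec x x)⁻¹ *ᵥ x) ≠ 0) (b : n → K) (y : K) :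
    M⁻¹ *ᵥ (b - (c * y) • x) =
      (M + c • vecMulVec x x)⁻¹ *ᵥ b +
        (c * (x ⬝ᵥ (M + c • vecMulVec x x)⁻¹ *ᵥ b - y) /
          (1 - c * (x ⬝ᵥ (M + c • vecMulVec x x)⁻¹ *ᵥ x))) •
          ((M + c • vecMulVec x x)⁻¹ *ᵥ x) := by
  set A := M + c • vecMulVec x x
  set s := c * (x ⬝ᵥ A⁻¹ *ᵥ b - y) / (1 - c * (x ⬝ᵥ A⁻¹ *ᵥ x))
  have hA_cancel (v : n → K) : A *ᵥ A⁻¹ *ᵥ v = v := by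
    rw [mulVec_mulVec, mul_nonsing_inv A hA, one_mulVec]
  have hM_apply (w : n → K) : M *ᵥ w = A *ᵥ w - (c * (x ⬝ᵥ w)) • x :=
    eq_sub_of_add_eq (add_smul_vecMulVec_mulVec M c x w).symm
  have hs : s * (1 - c * (x ⬝ᵥ A⁻¹ *ᵥ x)) = c * (x ⬝ᵥ A⁻¹ *ᵥ b - y) := div_mul_cancel₀ _ hct
  suffices M *ᵥ (A⁻¹ *ᵥ b + s • A⁻¹ *ᵥ x) = b - (c * y) • x by
    rw [← this, mulVec_mulVec, nonsing_inv_mul M hM, one_mulVec]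
  rw [hM_apply, mulVec_add, mulVec_smul, hA_cancel, hA_cancel, dotProduct_add, dotProduct_smul,
    smul_eq_mul]
  ext i
  simp only [Pi.add_apply, Pi.sub_apply, Pi.smul_apply, smul_eq_mul]
  linear_combination (x i) * hs

theorem mul_dotProduct_inv_add_smul_vecMulVec_mulVec_lt_one {M : Matrix n n ℝ} (hM : M.PosDef)
    {c : ℝ} (hc : 0 ≤ c) (x : n → ℝ) :
    c * (x ⬝ᵥ (M + c • vecMulVec x x)⁻¹ *ᵥ x) < 1 := by
  set A := M + c • vecMulVec x x
  have hA : A.PosDef := hM.add_smul_vecMulVec_self hc x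
  rcases eq_or_ne x 0 with rfl | hx
  · simp
  set u := A⁻¹ *ᵥ x
  have hAu : A *ᵥ u = x := by
    rw [mulVec_mulVec, mul_nonsing_inv A hA.det_pos.ne'.isUnit, one_mulVec]
  have ht : 0 ≤ x ⬝ᵥ u := by simpa using hA.inv.posSemidef.dotProduct_mulVec_nonneg x
  have hu : u ≠ 0 := fun h => hx (by rw [← hAu, h, mulVec_zero])
  -- `uᵀ M u = uᵀ A u - c (xᵀ u)² = t (1 - c t)` with `t = xᵀ u`
  have hMu : 0 < (x ⬝ᵥ u) * (1 - c * (x ⬝ᵥ u)) := by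
    have := hM.dotProduct_mulVec_pos hu
    rw [eq_sub_of_add_eq (add_smul_vecMulVec_mulVec M c x u).symm, hAu] at this
    simp only [star_trivial, dotProduct_sub, dotProduct_smul, smul_eq_mul,
      dotProduct_comm u x] at this
    linarith
  nlinarith

end Matrix

theorem stmt_10_general (N P₁ P₂ : ℕ)
    (X₁ : Matrix (Fin N) (Fin P₁) ℝ) (X₂ : Matrix (Fin N) (Fin P₂) ℝ)
    (d : Fin N → ℝ) (hd : ∀ i, 0 < d i)
    (S : Matrix (Fin P₂) (Fin P₂) ℝ)
    (Y : Fin N → ℝ)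
    (B : Finset (Fin N))
    (xj : Fin P₁ ⊕ Fin P₂ → ℝ) (φj : ℝ)
    -- all rows of X indexed by B equal the common row xⱼᵀ
    (hrow : ∀ m ∈ B, ∀ k, Matrix.fromCols X₁ X₂ m k = xj k)
    -- all diagonal entries of Φ indexed by B equal the common φⱼ²
    (hdB : ∀ m ∈ B, d m = φj ^ 2)
    -- V₋ exists and is positive definite
    (hVm : (((Matrix.fromCols X₁ X₂).submatrix
          (Subtype.val : {m : Fin N // m ∉ B} → Fin N) id)ᵀ *
        (Matrix.diagonal fun m : {m : Fin N // m ∉ B} => d m.1)⁻¹ *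
        ((Matrix.fromCols X₁ X₂).submatrix
          (Subtype.val : {m : Fin N // m ∉ B} → Fin N) id) +
        Matrix.fromBlocks 0 0 0 S⁻¹)⁻¹.PosDef) :
    let Φ : Matrix (Fin N) (Fin N) ℝ := Matrix.diagonal d
    let X : Matrix (Fin N) (Fin P₁ ⊕ Fin P₂) ℝ := Matrix.fromCols X₁ X₂
    let V : Matrix (Fin P₁ ⊕ Fin P₂) (Fin P₁ ⊕ Fin P₂) ℝ :=
      (Xᵀ * Φ⁻¹ * X + Matrix.fromBlocks 0 0 0 S⁻¹)⁻¹
    let Xm : Matrix {m : Fin N // m ∉ B} (Fin P₁ ⊕ Fin P₂) ℝ :=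
      X.submatrix (Subtype.val : {m : Fin N // m ∉ B} → Fin N) id
    let Φm : Matrix {m : Fin N // m ∉ B} {m : Fin N // m ∉ B} ℝ :=
      Matrix.diagonal fun m : {m : Fin N // m ∉ B} => d m.1
    let Ym : {m : Fin N // m ∉ B} → ℝ := fun m => Y m.1
    let Vm : Matrix (Fin P₁ ⊕ Fin P₂) (Fin P₁ ⊕ Fin P₂) ℝ :=
      (Xmᵀ * Φm⁻¹ * Xm + Matrix.fromBlocks 0 0 0 S⁻¹)⁻¹
    let βhat : Fin P₁ ⊕ Fin P₂ → ℝ := (V * Xᵀ * Φ⁻¹) *ᵥ Y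
    let βm : Fin P₁ ⊕ Fin P₂ → ℝ := (Vm * Xmᵀ * Φm⁻¹) *ᵥ Ym
    let nj : ℝ := (B.card : ℝ)
    let Yhatj : ℝ := xj ⬝ᵥ βhat
    let Ybarj : ℝ := (∑ m ∈ B, Y m) / nj
    nj / φj ^ 2 * (xj ⬝ᵥ V *ᵥ xj) < 1 ∧
    βm = βhat +
      ((nj / φj ^ 2) * (Yhatj - Ybarj) / (1 - nj / φj ^ 2 * (xj ⬝ᵥ V *ᵥ xj))) • (V *ᵥ xj) := by
  intro Φ X V Xm Φm Ym Vm βhat βm nj Yhatj Ybarj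
  set c := nj / φj ^ 2
  set Am := Xmᵀ * Φm⁻¹ * Xm + fromBlocks 0 0 0 S⁻¹
  set b := (Xᵀ * Φ⁻¹) *ᵥ Y
  have hXB : ∀ m ∈ B, X m = xj := fun m hm => funext (hrow m hm)
  have hdB_inv : ∀ m ∈ B, d⁻¹ m = (φj ^ 2)⁻¹ := fun m hm => by rw [Pi.inv_apply, hdB m hm]
  have hΦ : Φ⁻¹ = diagonal d⁻¹ := inv_diagonal_of_ne_zero fun i => (hd i).ne'
  have hΦm : Φm⁻¹ = diagonal fun m : {m // m ∉ B} => d⁻¹ m :=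
    inv_diagonal_of_ne_zero fun m => (hd m).ne'
  have hV : V = (Am + c • vecMulVec xj xj)⁻¹ := by
    have := transpose_mul_diagonal_mul_self_eq_submatrix_add X d⁻¹ hXB hdB_inv
    rw [← hΦ, ← hΦm, ← div_eq_mul_inv] at this
    simp only [V, this, Am, add_right_comm]
    rfl
  have hcY : c * Ybarj = (φj ^ 2)⁻¹ * ∑ m ∈ B, Y m := by
    rcases B.eq_empty_or_nonempty with hB | hB
    · simp [Ybarj, hB]
    · have hnj : nj ≠ 0 := Nat.cast_ne_zero.mpr hB.card_pos.ne'
      rw [div_mul_div_comm, mul_comm nj, mul_div_mul_right _ _ hnj, div_eq_inv_mul]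
  have hb : (Xmᵀ * Φm⁻¹) *ᵥ Ym = b - (c * Ybarj) • xj := by
    have := transpose_mul_diagonal_mulVec_eq_submatrix_add X d⁻¹ Y hXB hdB_inv
    rw [← hΦ, ← hΦm, ← hcY] at this
    exact eq_sub_of_add_eq this.symm
  have hAm : Am.PosDef := posDef_inv_iff.mp hVm
  have hc : 0 ≤ c := by positivity
  have hlt := mul_dotProduct_inv_add_smul_vecMulVec_mulVec_lt_one hAm hc xj
  have hβ : βhat = V *ᵥ b := by simp only [βhat, b, mulVec_mulVec, Matrix.mul_assoc]
  refine ⟨hV ▸ hlt, ?_⟩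
  calc βm = Am⁻¹ *ᵥ (b - (c * Ybarj) • xj) := by
        simp only [βm, ← hb, mulVec_mulVec, Matrix.mul_assoc]; rfl
    _ = _ := inv_add_smul_vecMulVec_mulVec hAm.det_pos.ne'.isUnit
        (hAm.add_smul_vecMulVec_self hc xj).det_pos.ne'.isUnit (sub_pos.mpr hlt).ne' b Ybarj
    _ = _ := by rw [← hV, ← hβ, mul_sub]

/-- Deleting a cluster `B` of `n_j` identical rows (common row `xⱼᵀ`, common
noise variance `φⱼ²`), we have `(n_j/φⱼ²) xⱼᵀ V xⱼ < 1` and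
`β̂₋ = β̂ + (n_j/φⱼ²)(Ŷⱼ − Ȳⱼ)/(1 − (n_j/φⱼ²) xⱼᵀ V xⱼ) · V xⱼ`. -/
theorem stmt_10 (N P₁ P₂ : ℕ) (hN : 0 < N) (hP₁ : 0 < P₁) (hP₂ : 0 < P₂)
    (X₁ : Matrix (Fin N) (Fin P₁) ℝ) (X₂ : Matrix (Fin N) (Fin P₂) ℝ)
    (hX₁ : LinearIndependent ℝ X₁ᵀ)
    (d : Fin N → ℝ) (hd : ∀ i, 0 < d i)
    (S : Matrix (Fin P₂) (Fin P₂) ℝ) (hS : S.PosDef)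
    (Y : Fin N → ℝ)
    (B : Finset (Fin N)) (hB : B.Nonempty)
    (xj : Fin P₁ ⊕ Fin P₂ → ℝ) (φj : ℝ) (hφj : 0 < φj)
    -- all rows of X indexed by B equal the common row xⱼᵀ
    (hrow : ∀ m ∈ B, ∀ k, Matrix.fromCols X₁ X₂ m k = xj k)
    -- all diagonal entries of Φ indexed by B equal the common φⱼ²
    (hdB : ∀ m ∈ B, d m = φj ^ 2)
    -- V₋ exists and is positive definite
    (hVm : (((Matrix.fromCols X₁ X₂).submatrix
          (Subtype.val : {m : Fin N // m ∉ B} → Fin N) id)ᵀ *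
        (Matrix.diagonal fun m : {m : Fin N // m ∉ B} => d m.1)⁻¹ *
        ((Matrix.fromCols X₁ X₂).submatrix
          (Subtype.val : {m : Fin N // m ∉ B} → Fin N) id) +
        Matrix.fromBlocks 0 0 0 S⁻¹)⁻¹.PosDef) :
    let Φ : Matrix (Fin N) (Fin N) ℝ := Matrix.diagonal d
    let X : Matrix (Fin N) (Fin P₁ ⊕ Fin P₂) ℝ := Matrix.fromCols X₁ X₂
    let V : Matrix (Fin P₁ ⊕ Fin P₂) (Fin P₁ ⊕ Fin P₂) ℝ :=
      (Xᵀ * Φ⁻¹ * X + Matrix.fromBlocks 0 0 0 S⁻¹)⁻¹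
    let Xm : Matrix {m : Fin N // m ∉ B} (Fin P₁ ⊕ Fin P₂) ℝ :=
      X.submatrix (Subtype.val : {m : Fin N // m ∉ B} → Fin N) id
    let Φm : Matrix {m : Fin N // m ∉ B} {m : Fin N // m ∉ B} ℝ :=
      Matrix.diagonal fun m : {m : Fin N // m ∉ B} => d m.1
    let Ym : {m : Fin N // m ∉ B} → ℝ := fun m => Y m.1
    let Vm : Matrix (Fin P₁ ⊕ Fin P₂) (Fin P₁ ⊕ Fin P₂) ℝ :=
      (Xmᵀ * Φm⁻¹ * Xm + Matrix.fromBlocks 0 0 0 S⁻¹)⁻¹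
    let βhat : Fin P₁ ⊕ Fin P₂ → ℝ := (V * Xᵀ * Φ⁻¹) *ᵥ Y
    let βm : Fin P₁ ⊕ Fin P₂ → ℝ := (Vm * Xmᵀ * Φm⁻¹) *ᵥ Ym
    let nj : ℝ := (B.card : ℝ)
    let Yhatj : ℝ := xj ⬝ᵥ βhat
    let Ybarj : ℝ := (∑ m ∈ B, Y m) / nj
    nj / φj ^ 2 * (xj ⬝ᵥ V *ᵥ xj) < 1 ∧
    βm = βhat +
      ((nj / φj ^ 2) * (Yhatj - Ybarj) / (1 - nj / φj ^ 2 * (xj ⬝ᵥ V *ᵥ xj))) • (V *ᵥ xj) :=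
  stmt_10_general N P₁ P₂ X₁ X₂ d hd S Y B xj φj hrow hdB hVm
end
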